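/- Let α > 0 with α ≠ 1, and let ρ and σ be density matrices on ℂ^n with σ positive definite. Define the escort matrices ρ^{(α)} = ρ^α / Tr(ρ^α) and σ^{(α)} = σ^α / Tr(σ^α), which are again density matrices. Then the quantum relative α-entropy equals the Petz–Rényi relative entropy of order 1/α of the escort matrices: S_α(ρ‖σ) = D̂_{1/α}(ρ^{(α)} ‖ σ^{(α)}). -/

import Mathlib

/-!
Write `c = Tr ρ^α` and `d = Tr σ^α`. Since `(t A^α)^r = t^r A^{αr}` for `A ≥ 0` and `t > 0`,
the functional calculus gives `(ρ^{(α)})^{1/α} = c^{-1/α} ρ` and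
`(σ^{(α)})^{1-1/α} = d^{(1-α)/α} σ^{α-1}`, so the trace in `D̂_{1/α}` is
`c^{-1/α} d^{(1-α)/α} Tr(ρ σ^{α-1})`; multiplying its logarithm by `1/(1/α - 1) = α/(1-α)`
gives `S_α(ρ‖σ)`. The logarithms are of positive numbers: `Tr(ρ σ^{α-1}) > 0` because
`Tr(A B) = Tr(B^{1/2} A B^{1/2})` with `B^{1/2} A B^{1/2}` positive semidefinite and nonzero.
-/

open Matrix ComplexOrder

/-- Real power of a Hermitian matrix via its spectral decomposition:
`A ^ r = ∑ i, (λ i) ^ r |x i⟩⟨x i|` (and `0` if `A` is not Hermitian). -/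
noncomputable def mRpow {m : Type*} [Fintype m] [DecidableEq m]
    (A : Matrix m m ℂ) (r : ℝ) : Matrix m m ℂ :=
  if hA : A.IsHermitian then
    (hA.eigenvectorUnitary : Matrix m m ℂ) *
      Matrix.diagonal (fun i => ((hA.eigenvalues i ^ r : ℝ) : ℂ)) *
      star (hA.eigenvectorUnitary : Matrix m m ℂ)
  else 0

/-- The quantum relative α-entropy
`S_α(ρ‖σ) = (α/(1−α))·log Tr(ρ σ^{α−1}) − (1/(1−α))·log Tr(ρ^α) + log Tr(σ^α)`. -/
noncomputable def Salpha {m : Type*} [Fintype m] [DecidableEq m]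
    (α : ℝ) (ρ σ : Matrix m m ℂ) : ℝ :=
  α / (1 - α) * Real.log ((ρ * mRpow σ (α - 1)).trace.re)
    - 1 / (1 - α) * Real.log ((mRpow ρ α).trace.re)
    + Real.log ((mRpow σ α).trace.re)

/-- The Petz–Rényi β-relative entropy `D̂_β(ρ‖σ) = (1/(β−1))·log Tr(ρ^β σ^{1−β})`. -/
noncomputable def petzRenyi {m : Type*} [Fintype m] [DecidableEq m]
    (β : ℝ) (ρ σ : Matrix m m ℂ) : ℝ :=
  1 / (β - 1) * Real.log ((mRpow ρ β * mRpow σ (1 - β)).trace.re)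

/-- The α-escort matrix `ρ^{(α)} = ρ^α / Tr(ρ^α)`. -/
noncomputable def escort {m : Type*} [Fintype m] [DecidableEq m]
    (α : ℝ) (ρ : Matrix m m ℂ) : Matrix m m ℂ :=
  ((mRpow ρ α).trace)⁻¹ • mRpow ρ α

namespace Matrix
open scoped MatrixOrder

variable {n 𝕜 : Type*} [Fintype n] [DecidableEq n] [RCLike 𝕜]

lemma PosSemidef.trace_mul_pos_of_posDef {A B : Matrix n n 𝕜} (hA : A.PosSemidef) (hA0 : A ≠ 0)
    (hB : B.PosDef) : 0 < (A * B).trace := by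
  set S := CFC.sqrt B
  have hS : IsStrictlyPositive S := hB.isStrictlyPositive.sqrt
  have hSA : (S * A * S).PosSemidef := by
    simpa only [← star_eq_conjTranspose, hS.isSelfAdjoint.star_eq] using
      hA.mul_mul_conjTranspose_same S
  have htr : (A * B).trace = (S * A * S).trace := by
    rw [trace_mul_cycle, CFC.sqrt_mul_sqrt_self B hB.posSemidef.nonneg, trace_mul_comm]
  have hSA0 : S * A * S ≠ 0 := by
    rwa [ne_eq, hS.isUnit.mul_left_eq_zero, hS.isUnit.mul_right_eq_zero]
  rw [htr]
  exact hSA.trace_nonneg.lt_of_ne' (mt hSA.trace_eq_zero_iff.mp hSA0)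

end Matrix

section mRpow
open scoped MatrixOrder

variable {m : Type*} [Fintype m] [DecidableEq m] {A : Matrix m m ℂ}

lemma mRpow_eq_cfc (hA : A.IsHermitian) (r : ℝ) : mRpow A r = cfc (fun x : ℝ => x ^ r) A := by
  rw [mRpow, dif_pos hA, hA.cfc_eq]
  rfl

lemma trace_mRpow (hA : A.IsHermitian) (r : ℝ) :
    (mRpow A r).trace = ((∑ i, hA.eigenvalues i ^ r : ℝ) : ℂ) := by
  rw [mRpow, dif_pos hA, trace_mul_cycle, Unitary.coe_star_mul_self, one_mul, trace_diagonal,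
    Complex.ofReal_sum]

lemma re_trace_mRpow_pos (hA : A.PosSemidef) (hA0 : A ≠ 0) (r : ℝ) :
    0 < (mRpow A r).trace.re := by
  obtain ⟨i, hi⟩ : ∃ i, hA.1.eigenvalues i ≠ 0 := by
    by_contra! h
    exact hA0 (hA.1.eigenvalues_eq_zero_iff.mp (funext h))
  rw [trace_mRpow hA.1, Complex.ofReal_re]
  exact Finset.sum_pos' (fun j _ => Real.rpow_nonneg (hA.eigenvalues_nonneg j) r)
    ⟨i, Finset.mem_univ i, Real.rpow_pos_of_pos ((hA.eigenvalues_nonneg i).lt_of_ne' hi) r⟩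

lemma posSemidef_mRpow (hA : A.PosSemidef) (r : ℝ) : (mRpow A r).PosSemidef := by
  rw [mRpow_eq_cfc hA.1, ← nonneg_iff_posSemidef]
  exact cfc_nonneg fun x hx => Real.rpow_nonneg (spectrum_nonneg_of_nonneg hA.nonneg hx) r

lemma posDef_mRpow (hA : A.PosDef) (r : ℝ) : (mRpow A r).PosDef := by
  rw [mRpow_eq_cfc hA.1, ← isStrictlyPositive_iff_posDef,
    cfc_isStrictlyPositive_iff _ _ (finite_real_spectrum.continuousOn _)]
  exact fun x hx => Real.rpow_pos_of_pos
    ((StarOrderedRing.isStrictlyPositive_iff_spectrum_pos A).mp hA.isStrictlyPositive x hx) r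

lemma mRpow_one (hA : A.IsHermitian) : mRpow A 1 = A := by
  simp only [mRpow_eq_cfc hA, Real.rpow_one, cfc_id' ℝ A]

lemma mRpow_mRpow (hA : A.PosSemidef) (a b : ℝ) : mRpow (mRpow A a) b = mRpow A (a * b) := by
  rw [mRpow_eq_cfc (posSemidef_mRpow hA a).1, mRpow_eq_cfc hA.1, mRpow_eq_cfc hA.1,
    ← cfc_comp _ _ A hA.1.isSelfAdjoint ((finite_real_spectrum.image _).continuousOn _)
      (finite_real_spectrum.continuousOn _)]
  exact cfc_congr fun x hx => (Real.rpow_mul (spectrum_nonneg_of_nonneg hA.nonneg hx) a b).symm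

lemma mRpow_smul (hA : A.PosSemidef) {t : ℝ} (ht : 0 < t) (r : ℝ) :
    mRpow (t • A) r = t ^ r • mRpow A r := by
  rw [mRpow_eq_cfc (hA.smul ht.le).1, mRpow_eq_cfc hA.1,
    ← cfc_comp_smul t _ A ((finite_real_spectrum.image _).continuousOn _) hA.1.isSelfAdjoint,
    ← cfc_const_mul _ _ A (finite_real_spectrum.continuousOn _)]
  exact cfc_congr fun x hx => Real.mul_rpow ht.le (spectrum_nonneg_of_nonneg hA.nonneg hx)

end mRpow

section escort

variable {m : Type*} [Fintype m] [DecidableEq m] {A : Matrix m m ℂ}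

lemma escort_eq_smul (hA : A.IsHermitian) (α : ℝ) :
    escort α A = (mRpow A α).trace.re⁻¹ • mRpow A α := by
  rw [escort, trace_mRpow hA, Complex.ofReal_re, ← Complex.ofReal_inv, Complex.coe_smul]

lemma posSemidef_escort (hA : A.PosSemidef) (α : ℝ) : (escort α A).PosSemidef := by
  rw [escort_eq_smul hA.1]
  exact (posSemidef_mRpow hA α).smul
    (inv_nonneg.mpr (Complex.nonneg_iff.mp (posSemidef_mRpow hA α).trace_nonneg).1)

lemma trace_escort (hA : A.PosSemidef) (hA0 : A ≠ 0) (α : ℝ) : (escort α A).trace = 1 := by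
  rw [escort, trace_smul, smul_eq_mul, inv_mul_cancel₀]
  exact fun h => (re_trace_mRpow_pos hA hA0 α).ne' (by rw [h, Complex.zero_re])

lemma mRpow_escort (hA : A.PosSemidef) (hA0 : A ≠ 0) (α r : ℝ) :
    mRpow (escort α A) r = (mRpow A α).trace.re ^ (-r) • mRpow A (α * r) := by
  have hc := re_trace_mRpow_pos hA hA0 α
  rw [escort_eq_smul hA.1, mRpow_smul (posSemidef_mRpow hA α) (inv_pos.mpr hc), mRpow_mRpow hA,
    Real.inv_rpow hc.le, Real.rpow_neg hc.le]

end escort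

/-- The escort matrices are density matrices, and the quantum relative α-entropy equals
the Petz–Rényi relative entropy of order `1/α` of the escort matrices:
`S_α(ρ‖σ) = D̂_{1/α}(ρ^{(α)} ‖ σ^{(α)})`. -/
theorem Salpha_eq_petzRenyi_escort {n : ℕ} (α : ℝ) (hα : 0 < α) (hα1 : α ≠ 1)
    (ρ σ : Matrix (Fin n) (Fin n) ℂ)
    (hρ : ρ.PosSemidef) (hρ1 : ρ.trace = 1)
    (hσ : σ.PosDef) (hσ1 : σ.trace = 1) :
    ((escort α ρ).PosSemidef ∧ (escort α ρ).trace = 1) ∧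
    ((escort α σ).PosSemidef ∧ (escort α σ).trace = 1) ∧
    Salpha α ρ σ = petzRenyi (1/α) (escort α ρ) (escort α σ) := by
  have hρ0 : ρ ≠ 0 := by rintro rfl; simp at hρ1
  have hσ0 : σ ≠ 0 := by rintro rfl; simp at hσ1
  refine ⟨⟨posSemidef_escort hρ α, trace_escort hρ hρ0 α⟩,
    ⟨posSemidef_escort hσ.posSemidef α, trace_escort hσ.posSemidef hσ0 α⟩, ?_⟩
  have hα0 : α ≠ 0 := hα.ne'
  have hρ_pow : mRpow (escort α ρ) (1 / α) = (mRpow ρ α).trace.re ^ (-(1 / α)) • ρ := by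
    rw [mRpow_escort hρ hρ0, mul_one_div_cancel hα0, mRpow_one hρ.1]
  have hσ_pow : mRpow (escort α σ) (1 - 1 / α)
      = (mRpow σ α).trace.re ^ (-(1 - 1 / α)) • mRpow σ (α - 1) := by
    rw [mRpow_escort hσ.posSemidef hσ0, mul_sub, mul_one, mul_one_div_cancel hα0]
  have hT := Complex.pos_iff.mp (hρ.trace_mul_pos_of_posDef hρ0 (posDef_mRpow hσ (α - 1))) |>.1
  have hcρ := re_trace_mRpow_pos hρ hρ0 α
  have hcσ := re_trace_mRpow_pos hσ.posSemidef hσ0 α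
  rw [Salpha, petzRenyi, hρ_pow, hσ_pow, smul_mul_smul_comm, trace_smul, Complex.real_smul,
    Complex.re_ofReal_mul, Real.log_mul (by positivity) hT.ne',
    Real.log_mul (by positivity) (by positivity), Real.log_rpow hcρ, Real.log_rpow hcσ]
  have h1α : 1 - α ≠ 0 := sub_ne_zero.mpr hα1.symm
  field_simp
  ring
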